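/- arXiv:2405.18531 — 8 statements merged into one kernel-verified Lean document; each statement's English description precedes it below -/
import Mathlib

section
/- Under continuity, sharp discontinuity, and time-invariance of confounding effects, the difference-in-discontinuities estimand identifies the average treatment effect on confounded units at the cutoff: τ^DiDC = E[Y₁(1,1) − Y₁(1,0) | Z = z₀]. -/
/-- Under continuity, sharp discontinuity and time-invariance of confounding
effects, the DiDC estimand identifies the average treatment effect on
confounded units at the cutoff: τ^DiDC = a(1,1) − a(1,0). -/
theorem didc_identifies_tau_c
    (a11 a10 a00 b10 b00 τDiDC : ℝ)
    (hτ : τDiDC = (a11 - a00) - (b10 - b00))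
    (htimeinv : b10 - b00 = a10 - a00) :
    τDiDC = a11 - a10 := by
  subst hτ; rw [htimeinv]; ring
end

section
/- Under continuity, sharp discontinuity, time-invariance of confounding effects, and the no-interaction assumption, the difference-in-discontinuities estimand identifies the treatment effect regardless of confounder status: τ^DiDC = E[Y₁(d₀,1) − Y₁(d₀,0) | Z = z₀] for each d₀ ∈ {0,1}. -/
/-- Under continuity, sharp discontinuity, time-invariance of confounding
effects and no-interaction, the DiDC estimand identifies the treatment effect
regardless of confounder status: τ^DiDC = a(d₀,1) − a(d₀,0) for d₀ ∈ {0,1}. -/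
theorem didc_identifies_general_effect
    (a11 a10 a01 a00 b10 b00 τDiDC : ℝ)
    (hτ : τDiDC = (a11 - a00) - (b10 - b00))
    (htimeinv : b10 - b00 = a10 - a00)
    (hnointeraction : a11 - a10 = a01 - a00) :
    τDiDC = a11 - a10 ∧ τDiDC = a01 - a00 := by
  constructor <;> linarith
end

section
/- Under the multiplicative effects assumption replacing no-interaction, the treatment effect without the confounder is identified as τ^DiDC / τ₀^RD + 1 = E[Y₁(0,1) − Y₁(0,0) | Z = z₀], provided τ₀^RD ≠ 0. -/
/-- Under the multiplicative effects assumption (replacing no-interaction),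
the treatment effect without the confounder is identified as
τ^DiDC / τ₀^RD + 1 = a(0,1) − a(0,0), provided τ₀^RD ≠ 0. -/
theorem didc_multiplicative_identification
    (a11 a10 a01 a00 b10 b00 τDiDC τ0RD : ℝ)
    (hτ : τDiDC = (a11 - a00) - (b10 - b00))
    (htimeinv : b10 - b00 = a10 - a00)
    (hmult : a11 - a00 = (a01 - a00) * (a10 - a00))
    (hτ0 : τ0RD = b10 - b00)
    (hτ0ne : τ0RD ≠ 0) :
    τDiDC / τ0RD + 1 = a01 - a00 := by
  have hτ_factor : τDiDC = (a01 - a00 - 1) * τ0RD := by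
    rw [hτ, hmult, hτ0, htimeinv]
    ring
  rw [hτ_factor, mul_div_cancel_right₀ _ hτ0ne]
  ring
end

section
/- Under the bounded variation assumptions, the confounded treatment effect τ_c is partially identified: max{ΔY⁺ − c₁, (ΔY⁺ − ΔY⁻) − c₂} ≤ τ_c ≤ min{ΔY⁺ + c₁, (ΔY⁺ − ΔY⁻) + c₂}. -/
/-- Under the bounded variation assumptions, τ_c is partially identified:
max{ΔY⁺ − c₁, (ΔY⁺ − ΔY⁻) − c₂} ≤ τ_c ≤ min{ΔY⁺ + c₁, (ΔY⁺ − ΔY⁻) + c₂}.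
Here a = E[Y₁(1,1)|z₀], q = E[Y₁(1,0)|z₀], m0 = E[Y₀(1,0)|z₀],
d1 = E[Y₁(0,0)|z₀], d0 = E[Y₀(0,0)|z₀]. -/
theorem bounded_variation_bounds
    (a q m0 d1 d0 c1 c2 τc ΔYp ΔYm : ℝ)
    (hτc : τc = a - q)
    (hΔp : ΔYp = a - m0)
    (hΔm : ΔYm = d1 - d0)
    (hc1 : |q - m0| ≤ c1)
    (hc2 : |(q - d1) - (m0 - d0)| ≤ c2) :
    max (ΔYp - c1) ((ΔYp - ΔYm) - c2) ≤ τc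
      ∧ τc ≤ min (ΔYp + c1) ((ΔYp - ΔYm) + c2) := by
  rw [abs_le] at hc1 hc2
  constructor
  · apply max_le <;> [skip; skip] <;> subst hτc hΔp hΔm <;> linarith [hc1.1, hc1.2, hc2.1, hc2.2]
  · apply le_min <;> subst hτc hΔp hΔm <;> linarith [hc1.1, hc1.2, hc2.1, hc2.2]
end

section
/- Combining bounded variation with complementarity strengthens the upper bound on the unconfounded effect: under Assumptions 5, 6 and 7, τ_uc ≤ min{ΔY⁺ + c₁, Y₁⁺ − y^min}. -/
open MeasureTheory

/-- Combining bounded variation with complementarity strengthens the upper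
bound on the unconfounded effect: τ_uc ≤ min{ΔY⁺ + c₁, Y₁⁺ − y^min}, where
A = Y₁(1,1), B = Y₁(1,0), C = Y₁(0,1), D = Y₁(0,0), B₀ = Y₀(1,0). -/
theorem bounded_variation_complementarity_upper_bound
    {Ω : Type*} [MeasurableSpace Ω] (μ : Measure Ω) [IsProbabilityMeasure μ]
    (A B C D B0 : Ω → ℝ) (ymin ymax c1 : ℝ)
    (hA : Integrable A μ) (hB : Integrable B μ)
    (hC : Integrable C μ) (hD : Integrable D μ) (hB0 : Integrable B0 μ)
    (hbA : ∀ᵐ ω ∂μ, ymin ≤ A ω ∧ A ω ≤ ymax)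
    (hbB : ∀ᵐ ω ∂μ, ymin ≤ B ω ∧ B ω ≤ ymax)
    (hbC : ∀ᵐ ω ∂μ, ymin ≤ C ω ∧ C ω ≤ ymax)
    (hbD : ∀ᵐ ω ∂μ, ymin ≤ D ω ∧ D ω ≤ ymax)
    (hsuper : ∀ᵐ ω ∂μ, B ω + C ω ≤ A ω + D ω)
    (hbv : |∫ ω, (B ω - B0 ω) ∂μ| ≤ c1) :
    (∫ ω, (C ω - D ω) ∂μ)
      ≤ min ((∫ ω, (A ω - B0 ω) ∂μ) + c1) ((∫ ω, A ω ∂μ) - ymin) := by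
  have hkey : ∫ ω, (C ω - D ω) ∂μ ≤ ∫ ω, A ω ∂μ - ∫ ω, B ω ∂μ := by
    rw [← integral_sub hA hB]
    exact integral_mono_ae (f := fun ω => C ω - D ω) (g := fun ω => A ω - B ω)
      (hC.sub hD) (hA.sub hB) (hsuper.mono fun ω h => by dsimp only; linarith)
  have hBmin : ymin ≤ ∫ ω, B ω ∂μ := by
    have : ∫ ω, (ymin : ℝ) ∂μ ≤ ∫ ω, B ω ∂μ :=
      integral_mono_ae (integrable_const _) hB (hbB.mono fun ω h => h.1)
    simpa using this
  have hbv' : -c1 ≤ ∫ ω, (B ω - B0 ω) ∂μ := neg_le_of_abs_le hbv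
  rw [integral_sub hB hB0] at hbv'
  rw [integral_sub hC hD] at hkey
  rw [integral_sub hC hD]
  refine le_min ?_ (by linarith)
  rw [integral_sub hA hB0]
  linarith
end

section
/- Combining bounded variation with substitutability strengthens the lower bound on the unconfounded effect: under Assumptions 5, 6 and 8, τ_uc ≥ max{ΔY⁺ − c₁, Y₁⁺ − y^max}. -/
open MeasureTheory

/-- Combining bounded variation with substitutability strengthens the lower
bound on the unconfounded effect: τ_uc ≥ max{ΔY⁺ − c₁, Y₁⁺ − y^max}, where
A = Y₁(1,1), B = Y₁(1,0), C = Y₁(0,1), D = Y₁(0,0), B₀ = Y₀(1,0). -/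
theorem bounded_variation_substitutability_lower_bound
    {Ω : Type*} [MeasurableSpace Ω] (μ : Measure Ω) [IsProbabilityMeasure μ]
    (A B C D B0 : Ω → ℝ) (ymin ymax c1 : ℝ)
    (hA : Integrable A μ) (hB : Integrable B μ)
    (hC : Integrable C μ) (hD : Integrable D μ) (hB0 : Integrable B0 μ)
    (hbA : ∀ᵐ ω ∂μ, ymin ≤ A ω ∧ A ω ≤ ymax)
    (hbB : ∀ᵐ ω ∂μ, ymin ≤ B ω ∧ B ω ≤ ymax)
    (hbC : ∀ᵐ ω ∂μ, ymin ≤ C ω ∧ C ω ≤ ymax)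
    (hbD : ∀ᵐ ω ∂μ, ymin ≤ D ω ∧ D ω ≤ ymax)
    (hsub : ∀ᵐ ω ∂μ, A ω + D ω ≤ B ω + C ω)
    (hbv : |∫ ω, (B ω - B0 ω) ∂μ| ≤ c1) :
    max ((∫ ω, (A ω - B0 ω) ∂μ) - c1) ((∫ ω, A ω ∂μ) - ymax)
      ≤ ∫ ω, (C ω - D ω) ∂μ := by
  have hkey : ∫ ω, (A ω - B ω) ∂μ ≤ ∫ ω, (C ω - D ω) ∂μ := by
    apply integral_mono_ae (hA.sub hB) (hC.sub hD)
    filter_upwards [hsub] with ω h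
    simp only [Pi.sub_apply]
    linarith
  have hIA := integral_sub hA hB
  have hIAB0 := integral_sub hA hB0
  have hIBB0 := integral_sub hB hB0
  have hICD := integral_sub hC hD
  have habs := abs_le.mp hbv
  have hBmax : ∫ ω, B ω ∂μ ≤ ymax := by
    calc ∫ ω, B ω ∂μ ≤ ∫ _ω, ymax ∂μ := by
          apply integral_mono_ae hB (integrable_const _)
          filter_upwards [hbB] with ω h using h.2
      _ = ymax := by simp
  rw [max_le_iff]
  constructor
  · have : ∫ ω, (A ω - B0 ω) ∂μ - c1 ≤ ∫ ω, (A ω - B ω) ∂μ := by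
      rw [hIA, hIAB0]
      rw [hIBB0] at habs
      linarith [habs.2]
    linarith
  · have : ∫ ω, A ω ∂μ - ymax ≤ ∫ ω, (A ω - B ω) ∂μ := by
      rw [hIA]; linarith
    linarith
end

section
/- Under combined bounded variation, bounded outcomes, and complementarity, the confounded effect satisfies max{ΔY⁺ − c₁, (ΔY⁺ − ΔY⁻) − c₂, y^min − Y₁⁻} ≤ τ_c ≤ min{ΔY⁺ + c₁, (ΔY⁺ − ΔY⁻) + c₂, y^max − y^min}. -/
open MeasureTheory

/-- Under combined bounded variation, bounded outcomes and complementarity,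
max{ΔY⁺ − c₁, (ΔY⁺ − ΔY⁻) − c₂, y^min − Y₁⁻} ≤ τ_c
  ≤ min{ΔY⁺ + c₁, (ΔY⁺ − ΔY⁻) + c₂, y^max − y^min},
where A = Y₁(1,1), B = Y₁(1,0), C = Y₁(0,1), D = Y₁(0,0), B₀ = Y₀(1,0),
D₀ = Y₀(0,0), τ_c = E[A−B], ΔY⁺ = E[A−B₀], ΔY⁻ = E[D−D₀], Y₁⁻ = E[D]. -/
theorem combined_bounds_complementarity
    {Ω : Type*} [MeasurableSpace Ω] (μ : Measure Ω) [IsProbabilityMeasure μ]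
    (A B C D B0 D0 : Ω → ℝ) (ymin ymax c1 c2 : ℝ)
    (hA : Integrable A μ) (hB : Integrable B μ)
    (hC : Integrable C μ) (hD : Integrable D μ)
    (hB0 : Integrable B0 μ) (hD0 : Integrable D0 μ)
    (hbv1 : |∫ ω, (B ω - B0 ω) ∂μ| ≤ c1)
    (hbv2 : |(∫ ω, (B ω - D ω) ∂μ) - ∫ ω, (B0 ω - D0 ω) ∂μ| ≤ c2)
    (hbA : ∀ᵐ ω ∂μ, ymin ≤ A ω ∧ A ω ≤ ymax)
    (hbB : ∀ᵐ ω ∂μ, ymin ≤ B ω ∧ B ω ≤ ymax)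
    (hbC : ∀ᵐ ω ∂μ, ymin ≤ C ω ∧ C ω ≤ ymax)
    (hbD : ∀ᵐ ω ∂μ, ymin ≤ D ω ∧ D ω ≤ ymax)
    (hsuper : ∀ᵐ ω ∂μ, B ω + C ω ≤ A ω + D ω) :
    max (max ((∫ ω, (A ω - B0 ω) ∂μ) - c1)
             (((∫ ω, (A ω - B0 ω) ∂μ) - ∫ ω, (D ω - D0 ω) ∂μ) - c2))
        (ymin - ∫ ω, D ω ∂μ)
      ≤ ∫ ω, (A ω - B ω) ∂μ
    ∧ (∫ ω, (A ω - B ω) ∂μ)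
      ≤ min (min ((∫ ω, (A ω - B0 ω) ∂μ) + c1)
                 (((∫ ω, (A ω - B0 ω) ∂μ) - ∫ ω, (D ω - D0 ω) ∂μ) + c2))
            (ymax - ymin) := by
  rw [integral_sub hA hB, integral_sub hA hB0, integral_sub hD hD0,
    integral_sub hB hB0, integral_sub hB hD, integral_sub hB0 hD0] at *
  rw [abs_le] at hbv1 hbv2
  have hconst : ∀ r : ℝ, (∫ _ : Ω, r ∂μ) = r := by
    intro r; simp
  have hCmin : ymin ≤ ∫ ω, C ω ∂μ := by
    rw [← hconst ymin]
    exact integral_mono_ae (integrable_const _) hC (hbC.mono fun ω h => h.1)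
  have hAmax : (∫ ω, A ω ∂μ) ≤ ymax := by
    rw [← hconst ymax]
    exact integral_mono_ae hA (integrable_const _) (hbA.mono fun ω h => h.2)
  have hBmin : ymin ≤ ∫ ω, B ω ∂μ := by
    rw [← hconst ymin]
    exact integral_mono_ae (integrable_const _) hB (hbB.mono fun ω h => h.1)
  have hsup : (∫ ω, B ω ∂μ) + (∫ ω, C ω ∂μ) ≤ (∫ ω, A ω ∂μ) + (∫ ω, D ω ∂μ) := by
    rw [← integral_add hB hC, ← integral_add hA hD]
    exact integral_mono_ae (hB.add hC) (hA.add hD) hsuper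
  constructor
  · apply max_le (max_le ?_ ?_) ?_ <;> linarith
  · apply le_min (le_min ?_ ?_) ?_ <;> linarith
end

section
/- Under combined bounded variation, bounded outcomes, and substitutability, the confounded effect satisfies max{ΔY⁺ − c₁, (ΔY⁺ − ΔY⁻) − c₂, y^min − y^max} ≤ τ_c ≤ min{ΔY⁺ + c₁, (ΔY⁺ − ΔY⁻) + c₂, y^max − Y₁⁻}. -/
open MeasureTheory

/-- Under combined bounded variation, bounded outcomes and substitutability,
max{ΔY⁺ − c₁, (ΔY⁺ − ΔY⁻) − c₂, y^min − y^max} ≤ τ_c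
  ≤ min{ΔY⁺ + c₁, (ΔY⁺ − ΔY⁻) + c₂, y^max − Y₁⁻},
where A = Y₁(1,1), B = Y₁(1,0), C = Y₁(0,1), D = Y₁(0,0), B₀ = Y₀(1,0),
D₀ = Y₀(0,0), τ_c = E[A−B], ΔY⁺ = E[A−B₀], ΔY⁻ = E[D−D₀], Y₁⁻ = E[D]. -/
theorem combined_bounds_substitutability
    {Ω : Type*} [MeasurableSpace Ω] (μ : Measure Ω) [IsProbabilityMeasure μ]
    (A B C D B0 D0 : Ω → ℝ) (ymin ymax c1 c2 : ℝ)
    (hA : Integrable A μ) (hB : Integrable B μ)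
    (hC : Integrable C μ) (hD : Integrable D μ)
    (hB0 : Integrable B0 μ) (hD0 : Integrable D0 μ)
    (hbv1 : |∫ ω, (B ω - B0 ω) ∂μ| ≤ c1)
    (hbv2 : |(∫ ω, (B ω - D ω) ∂μ) - ∫ ω, (B0 ω - D0 ω) ∂μ| ≤ c2)
    (hbA : ∀ᵐ ω ∂μ, ymin ≤ A ω ∧ A ω ≤ ymax)
    (hbB : ∀ᵐ ω ∂μ, ymin ≤ B ω ∧ B ω ≤ ymax)
    (hbC : ∀ᵐ ω ∂μ, ymin ≤ C ω ∧ C ω ≤ ymax)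
    (hbD : ∀ᵐ ω ∂μ, ymin ≤ D ω ∧ D ω ≤ ymax)
    (hsub : ∀ᵐ ω ∂μ, A ω + D ω ≤ B ω + C ω) :
    max (max ((∫ ω, (A ω - B0 ω) ∂μ) - c1)
             (((∫ ω, (A ω - B0 ω) ∂μ) - ∫ ω, (D ω - D0 ω) ∂μ) - c2))
        (ymin - ymax)
      ≤ ∫ ω, (A ω - B ω) ∂μ
    ∧ (∫ ω, (A ω - B ω) ∂μ)
      ≤ min (min ((∫ ω, (A ω - B0 ω) ∂μ) + c1)
                 (((∫ ω, (A ω - B0 ω) ∂μ) - ∫ ω, (D ω - D0 ω) ∂μ) + c2))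
            (ymax - ∫ ω, D ω ∂μ) := by
  rw [integral_sub hA hB, integral_sub hA hB0, integral_sub hD hD0,
      integral_sub hB hD, integral_sub hB0 hD0, integral_sub hB hB0] at *
  set iA := ∫ ω, A ω ∂μ
  set iB := ∫ ω, B ω ∂μ
  set iC := ∫ ω, C ω ∂μ
  set iD := ∫ ω, D ω ∂μ
  set iB0 := ∫ ω, B0 ω ∂μ
  set iD0 := ∫ ω, D0 ω ∂μ
  rw [abs_le] at hbv1 hbv2
  have hsubI : iA + iD ≤ iB + iC := by
    rw [← integral_add hA hD, ← integral_add hB hC]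
    exact integral_mono_ae (hA.add hD) (hB.add hC) hsub
  have hAle : iA ≤ ymax := by
    calc iA ≤ ∫ _, ymax ∂μ := integral_mono_ae hA (integrable_const _) (hbA.mono fun ω h => h.2)
    _ = ymax := by simp
  have hBle : iB ≤ ymax := by
    calc iB ≤ ∫ _, ymax ∂μ := integral_mono_ae hB (integrable_const _) (hbB.mono fun ω h => h.2)
    _ = ymax := by simp
  have hCle : iC ≤ ymax := by
    calc iC ≤ ∫ _, ymax ∂μ := integral_mono_ae hC (integrable_const _) (hbC.mono fun ω h => h.2)
    _ = ymax := by simp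
  have hAge : ymin ≤ iA := by
    calc ymin = ∫ _, ymin ∂μ := by simp
    _ ≤ iA := integral_mono_ae (integrable_const _) hA (hbA.mono fun ω h => h.1)
  have hBge : ymin ≤ iB := by
    calc ymin = ∫ _, ymin ∂μ := by simp
    _ ≤ iB := integral_mono_ae (integrable_const _) hB (hbB.mono fun ω h => h.1)
  constructor
  · apply max_le
    · apply max_le <;> linarith [hbv1.1, hbv1.2, hbv2.1, hbv2.2]
    · linarith
  · apply le_min
    · apply le_min <;> linarith [hbv1.1, hbv1.2, hbv2.1, hbv2.2]
    · linarith
end
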